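/- arXiv:2512.00213 — 5 statements merged into one kernel-verified Lean document; each statement's English description precedes it below -/
import Mathlib

section
/- Let X be a measurable space with a measure λ and let φ : X × X → [0,1] be measurable and symmetric. For a finite set S ⊆ X and x ∈ X put φ̄(S,x) := ∏_{y∈S}(1−φ(x,y)) (with φ̄(∅,x)=1), and for finite sets S,T ⊆ X define K(S,T) := ∫ φ̄(S,x)·(1−φ̄(T,x)) λ(dx), an integral of a nonnegative measurable function valued in [0,∞]. Then for every n ∈ ℕ and all pairwise disjoint finite sets S₀, S₁, …, Sₙ ⊆ X: K(∅,S₀) + K(S₀,S₁) + K(S₀∪S₁,S₂) + ⋯ + K(S₀∪⋯∪S_{n−1},Sₙ) = K(∅, S₀∪⋯∪Sₙ). -/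
open MeasureTheory
open scoped ENNReal

/-- `phibar φ S x = ∏_{y ∈ S} (1 - φ x y)`: the probability that `x` is not connected
to any point of the finite set `S`. -/
noncomputable def phibar {X : Type*} (φ : X → X → ℝ) (S : Finset X) (x : X) : ℝ :=
  ∏ y ∈ S, (1 - φ x y)

/-- The total intensity kernel of the random connection model:
`K(S,T) = ∫ φ̄(S,x) (1 - φ̄(T,x)) λ(dx)`. -/
noncomputable def Kker {X : Type*} [MeasurableSpace X] (μ : Measure X)
    (φ : X → X → ℝ) (S T : Finset X) : ℝ≥0∞ :=
  ∫⁻ x, ENNReal.ofReal (phibar φ S x * (1 - phibar φ T x)) ∂μ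

/-!
Since the sets are disjoint, `φ̄(S₀ ∪ ⋯ ∪ S_{i-1}, x) = ∏_{j<i} φ̄(S_j, x)`, so pointwise in `x` the
integrands telescope: `∑_i ∏_{j<i} a_j (1 - a_i) = 1 - ∏_i a_i` with `a_i = φ̄(S_i, x)`. All
integrands lie in `[0,1]`, so the sum of the real integrands is read off in `ℝ≥0∞` and the
integrals of the (measurable) summands add up.
-/

open Function

section Phibar

variable {X : Type*} {φ : X → X → ℝ}

lemma phibar_empty (x : X) : phibar φ ∅ x = 1 :=
  Finset.prod_empty

lemma phibar_nonneg {S : Finset X} {x : X} (hφ : ∀ y, φ x y ≤ 1) : 0 ≤ phibar φ S x :=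
  Finset.prod_nonneg fun y _ => sub_nonneg.2 (hφ y)

lemma phibar_le_one {S : Finset X} {x : X} (hφ : ∀ y, φ x y ∈ Set.Icc (0 : ℝ) 1) :
    phibar φ S x ≤ 1 :=
  Finset.prod_le_one (fun y _ => sub_nonneg.2 (hφ y).2) fun y _ => sub_le_self _ (hφ y).1

lemma phibar_biUnion [DecidableEq X] {ι : Type*} {s : Finset ι} {S : ι → Finset X}
    (hS : (s : Set ι).PairwiseDisjoint S) (x : X) :
    phibar φ (s.biUnion S) x = ∏ i ∈ s, phibar φ (S i) x :=
  Finset.prod_biUnion hS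

lemma measurable_phibar [MeasurableSpace X] (hφ : Measurable (Function.uncurry φ))
    (S : Finset X) : Measurable (phibar φ S) :=
  Finset.measurable_prod _ fun _ _ =>
    measurable_const.sub (hφ.comp (measurable_id.prodMk measurable_const))

lemma sum_phibar_Iio_mul_one_sub_phibar [DecidableEq X] {ι : Type*} [Fintype ι]
    [LinearOrder ι] [LocallyFiniteOrderBot ι] {S : ι → Finset X}
    (hS : Pairwise (Disjoint on S)) (x : X) :
    ∑ i, phibar φ ((Finset.Iio i).biUnion S) x * (1 - phibar φ (S i) x)
      = 1 - phibar φ (Finset.univ.biUnion S) x := by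
  have hprod := Finset.prod_one_sub_ordered Finset.univ fun i => 1 - phibar φ (S i) x
  simp only [sub_sub_cancel, Finset.filter_gt_eq_Iio] at hprod
  rw [phibar_biUnion (hS.set_pairwise _), hprod, sub_sub_cancel]
  refine Finset.sum_congr rfl fun i _ => ?_
  rw [phibar_biUnion (hS.set_pairwise _), mul_comm]

end Phibar

lemma Kker_empty_left {X : Type*} [MeasurableSpace X] (μ : Measure X) (φ : X → X → ℝ)
    (T : Finset X) : Kker μ φ ∅ T = ∫⁻ x, ENNReal.ofReal (1 - phibar φ T x) ∂μ := by
  simp only [Kker, phibar_empty, one_mul]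

theorem sum_Kker_Iio_biUnion {X : Type*} [MeasurableSpace X] [DecidableEq X] (μ : Measure X)
    {φ : X → X → ℝ} (hmeas : Measurable (Function.uncurry φ))
    (h01 : ∀ x y, φ x y ∈ Set.Icc (0 : ℝ) 1) {ι : Type*} [Fintype ι] [LinearOrder ι]
    [LocallyFiniteOrderBot ι] {S : ι → Finset X} (hS : Pairwise (Disjoint on S)) :
    ∑ i, Kker μ φ ((Finset.Iio i).biUnion S) (S i) = Kker μ φ ∅ (Finset.univ.biUnion S) := by
  have hterm_nonneg (i : ι) (x : X) :
      0 ≤ phibar φ ((Finset.Iio i).biUnion S) x * (1 - phibar φ (S i) x) :=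
    mul_nonneg (phibar_nonneg fun y => (h01 x y).2) (sub_nonneg.2 (phibar_le_one (h01 x)))
  have hterm_meas (i : ι) : Measurable fun x =>
      ENNReal.ofReal (phibar φ ((Finset.Iio i).biUnion S) x * (1 - phibar φ (S i) x)) :=
    ENNReal.measurable_ofReal.comp
      ((measurable_phibar hmeas _).mul (measurable_const.sub (measurable_phibar hmeas _)))
  rw [Kker_empty_left]
  simp only [Kker]
  rw [← lintegral_finsetSum _ fun i _ => hterm_meas i]
  refine lintegral_congr fun x => ?_
  rw [← ENNReal.ofReal_sum_of_nonneg fun i _ => hterm_nonneg i x,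
    sum_phibar_Iio_mul_one_sub_phibar hS]

theorem stmt2_general {X : Type*} [MeasurableSpace X] [DecidableEq X] (μ : Measure X)
    (φ : X → X → ℝ) (hmeas : Measurable (Function.uncurry φ))
    (h01 : ∀ x y, φ x y ∈ Set.Icc (0 : ℝ) 1)
    (n : ℕ) (S : Fin (n + 1) → Finset X)
    (hdisj : ∀ i j, i ≠ j → Disjoint (S i) (S j)) :
    ∑ i : Fin (n + 1), Kker μ φ ((Finset.Iio i).biUnion S) (S i)
      = Kker μ φ ∅ (Finset.univ.biUnion S) :=
  sum_Kker_Iio_biUnion μ hmeas h01 fun i j => hdisj i j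

/-- Additivity of the kernel `K`: for pairwise disjoint finite sets `S₀, …, Sₙ`,
`K(∅,S₀) + K(S₀,S₁) + ⋯ + K(S₀ ∪ ⋯ ∪ S_{n-1}, Sₙ) = K(∅, S₀ ∪ ⋯ ∪ Sₙ)`. -/
theorem stmt2 {X : Type*} [MeasurableSpace X] [DecidableEq X] (μ : Measure X)
    (φ : X → X → ℝ) (hmeas : Measurable (Function.uncurry φ))
    (hsym : ∀ x y, φ x y = φ y x)
    (h01 : ∀ x y, φ x y ∈ Set.Icc (0 : ℝ) 1)
    (n : ℕ) (S : Fin (n + 1) → Finset X)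
    (hdisj : ∀ i j, i ≠ j → Disjoint (S i) (S j)) :
    ∑ i : Fin (n + 1), Kker μ φ ((Finset.Iio i).biUnion S) (S i)
      = Kker μ φ ∅ (Finset.univ.biUnion S) :=
  stmt2_general μ φ hmeas h01 n S hdisj
end

section
/- Let M be a measurable space equipped with a probability measure Q, and let d : M × M → [0,∞] be a measurable symmetric function. Define the iterated kernels by d⁽¹⁾ := d and d⁽ⁿ⁺¹⁾(p,q) := ∫ d⁽ⁿ⁾(p,r) d(r,q) Q(dr). Then for every n ≥ 1, ‖d⁽ⁿ⁾‖_{1,2} ≤ (‖d‖_{2,2})ⁿ, where ‖L‖_{1,2} := ( ∫ ( ∫ L(p,q) Q(dp) )² Q(dq) )^{1/2} and ‖L‖_{2,2} := ( ∬ L(p,q)² Q(dp) Q(dq) )^{1/2}. -/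
/-! Integrating `d⁽ⁿ⁺²⁾(p, q) = ∫ d⁽ⁿ⁺¹⁾(p, r) d(r, q) Q(dr)` in `p` and swapping the integrals
(Tonelli) shows that the column integrals `Fₙ(q) := ∫ d⁽ⁿ⁺¹⁾(p, q) Q(dp)` satisfy
`Fₙ₊₁(q) = ∫ Fₙ(r) d(r, q) Q(dr)`, while `F₀(q) = ∫ 1 · d(r, q) Q(dr)`. Cauchy–Schwarz in `r`
bounds `‖∫ f(r) d(r, ·) Q(dr)‖₂` by `‖f‖₂ ‖d‖_{2,2}`, and `‖1‖₂ = 1`, so by induction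
`‖Fₙ‖₂ ≤ ‖d‖_{2,2}^{n+1}`. -/

open MeasureTheory
open scoped ENNReal

/-- Iterated kernels: `iterK Q d n` is `d⁽ⁿ⁺¹⁾`, i.e. `iterK Q d 0 = d = d⁽¹⁾` and
`d⁽ⁿ⁺¹⁾(p,q) = ∫ d⁽ⁿ⁾(p,r) d(r,q) Q(dr)`. -/
noncomputable def iterK {M : Type*} [MeasurableSpace M] (Q : Measure M)
    (d : M → M → ℝ≥0∞) : ℕ → M → M → ℝ≥0∞
  | 0 => d
  | n + 1 => fun p q => ∫⁻ r, iterK Q d n p r * d r q ∂Q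

lemma ENNReal.sq_lintegral_mul_le {α : Type*} [MeasurableSpace α] (μ : Measure α)
    {f g : α → ℝ≥0∞} (hf : AEMeasurable f μ) (hg : AEMeasurable g μ) :
    (∫⁻ x, f x * g x ∂μ) ^ 2 ≤ (∫⁻ x, f x ^ 2 ∂μ) * ∫⁻ x, g x ^ 2 ∂μ := by
  have holder := ENNReal.lintegral_mul_le_Lp_mul_Lq μ Real.HolderConjugate.two_two hf hg
  simp only [ENNReal.rpow_two, Pi.mul_apply] at holder
  calc (∫⁻ x, f x * g x ∂μ) ^ 2
      ≤ ((∫⁻ x, f x ^ 2 ∂μ) ^ (1 / 2 : ℝ) * (∫⁻ x, g x ^ 2 ∂μ) ^ (1 / 2 : ℝ)) ^ 2 := by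
        gcongr
    _ = (∫⁻ x, f x ^ 2 ∂μ) * ∫⁻ x, g x ^ 2 ∂μ := by
        have half : (1 / 2 : ℝ) = ((2 : ℕ) : ℝ)⁻¹ := by norm_num
        rw [mul_pow, half, ENNReal.rpow_inv_natCast_pow two_ne_zero,
          ENNReal.rpow_inv_natCast_pow two_ne_zero]

lemma lintegral_sq_lintegral_mul_le {α β : Type*} [MeasurableSpace α] [MeasurableSpace β]
    (μ : Measure α) [SFinite μ] (ν : Measure β) {f : α → ℝ≥0∞} {k : α → β → ℝ≥0∞}
    (hf : AEMeasurable f μ) (hk : Measurable (Function.uncurry k)) :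
    ∫⁻ y, (∫⁻ x, f x * k x y ∂μ) ^ 2 ∂ν
      ≤ (∫⁻ x, f x ^ 2 ∂μ) * ∫⁻ y, ∫⁻ x, k x y ^ 2 ∂μ ∂ν := by
  calc ∫⁻ y, (∫⁻ x, f x * k x y ∂μ) ^ 2 ∂ν
      ≤ ∫⁻ y, (∫⁻ x, f x ^ 2 ∂μ) * ∫⁻ x, k x y ^ 2 ∂μ ∂ν :=
        lintegral_mono fun y =>
          ENNReal.sq_lintegral_mul_le μ hf hk.of_uncurry_right.aemeasurable
    _ = (∫⁻ x, f x ^ 2 ∂μ) * ∫⁻ y, ∫⁻ x, k x y ^ 2 ∂μ ∂ν :=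
        lintegral_const_mul _ (hk.pow_const 2).lintegral_prod_left'

section

variable {M : Type*} [MeasurableSpace M] (Q : Measure M) [SFinite Q] {d : M → M → ℝ≥0∞}

lemma measurable_uncurry_iterK (hd : Measurable (Function.uncurry d)) (n : ℕ) :
    Measurable (Function.uncurry (iterK Q d n)) := by
  induction n with
  | zero => exact hd
  | succ n ih =>
    have integrand : Measurable fun x : (M × M) × M => iterK Q d n x.1.1 x.2 * d x.2 x.1.2 :=
      (ih.comp (measurable_fst.fst.prodMk measurable_snd)).mul
        (hd.comp (measurable_snd.prodMk measurable_fst.snd))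
    exact integrand.lintegral_prod_right'

lemma lintegral_iterK_succ (hd : Measurable (Function.uncurry d)) (n : ℕ) (q : M) :
    ∫⁻ p, iterK Q d (n + 1) p q ∂Q = ∫⁻ r, (∫⁻ p, iterK Q d n p r ∂Q) * d r q ∂Q := by
  have hn := measurable_uncurry_iterK Q hd n
  calc ∫⁻ p, iterK Q d (n + 1) p q ∂Q = ∫⁻ p, ∫⁻ r, iterK Q d n p r * d r q ∂Q ∂Q := rfl
    _ = ∫⁻ r, ∫⁻ p, iterK Q d n p r * d r q ∂Q ∂Q :=
        lintegral_lintegral_swap (hn.mul (hd.of_uncurry_right.comp measurable_snd)).aemeasurable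
    _ = ∫⁻ r, (∫⁻ p, iterK Q d n p r ∂Q) * d r q ∂Q :=
        lintegral_congr fun r => lintegral_mul_const _ hn.of_uncurry_right

lemma lintegral_sq_lintegral_iterK_le [IsProbabilityMeasure Q]
    (hd : Measurable (Function.uncurry d)) (n : ℕ) :
    ∫⁻ q, (∫⁻ p, iterK Q d n p q ∂Q) ^ 2 ∂Q ≤ (∫⁻ q, ∫⁻ p, d p q ^ 2 ∂Q ∂Q) ^ (n + 1) := by
  induction n with
  | zero =>
    simpa [iterK] using lintegral_sq_lintegral_mul_le Q Q aemeasurable_const hd (f := fun _ => 1)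
  | succ n ih =>
    simp_rw [lintegral_iterK_succ Q hd]
    calc ∫⁻ q, (∫⁻ r, (∫⁻ p, iterK Q d n p r ∂Q) * d r q ∂Q) ^ 2 ∂Q
        ≤ (∫⁻ r, (∫⁻ p, iterK Q d n p r ∂Q) ^ 2 ∂Q) * ∫⁻ q, ∫⁻ p, d p q ^ 2 ∂Q ∂Q :=
          lintegral_sq_lintegral_mul_le Q Q
            (measurable_uncurry_iterK Q hd n).lintegral_prod_left'.aemeasurable hd
      _ ≤ (∫⁻ q, ∫⁻ p, d p q ^ 2 ∂Q ∂Q) ^ (n + 1) * ∫⁻ q, ∫⁻ p, d p q ^ 2 ∂Q ∂Q := by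
          gcongr
      _ = (∫⁻ q, ∫⁻ p, d p q ^ 2 ∂Q ∂Q) ^ (n + 2) := (pow_succ _ _).symm

end

theorem stmt4_general {M : Type*} [MeasurableSpace M] (Q : Measure M) [IsProbabilityMeasure Q]
    (d : M → M → ℝ≥0∞) (hmeas : Measurable (Function.uncurry d))
    (n : ℕ) :
    (∫⁻ q, (∫⁻ p, iterK Q d n p q ∂Q) ^ 2 ∂Q) ^ (1 / 2 : ℝ)
      ≤ ((∫⁻ q, ∫⁻ p, (d p q) ^ 2 ∂Q ∂Q) ^ (1 / 2 : ℝ)) ^ (n + 1) := by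
  calc (∫⁻ q, (∫⁻ p, iterK Q d n p q ∂Q) ^ 2 ∂Q) ^ (1 / 2 : ℝ)
      ≤ ((∫⁻ q, ∫⁻ p, d p q ^ 2 ∂Q ∂Q) ^ (n + 1)) ^ (1 / 2 : ℝ) := by
        gcongr
        exact lintegral_sq_lintegral_iterK_le Q hmeas n
    _ = ((∫⁻ q, ∫⁻ p, d p q ^ 2 ∂Q ∂Q) ^ (1 / 2 : ℝ)) ^ (n + 1) := by
        rw [← ENNReal.rpow_natCast, ← ENNReal.rpow_natCast, ← ENNReal.rpow_mul,
          ← ENNReal.rpow_mul, mul_comm]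

/-- `‖d⁽ⁿ⁾‖_{1,2} ≤ (‖d‖_{2,2})ⁿ`, where
`‖L‖_{1,2} = (∫ (∫ L(p,q) Q(dp))² Q(dq))^{1/2}` and
`‖L‖_{2,2} = (∬ L(p,q)² Q(dp) Q(dq))^{1/2}`. -/
theorem stmt4 {M : Type*} [MeasurableSpace M] (Q : Measure M) [IsProbabilityMeasure Q]
    (d : M → M → ℝ≥0∞) (hmeas : Measurable (Function.uncurry d))
    (hsym : ∀ p q, d p q = d q p) (n : ℕ) :
    (∫⁻ q, (∫⁻ p, iterK Q d n p q ∂Q) ^ 2 ∂Q) ^ (1 / 2 : ℝ)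
      ≤ ((∫⁻ q, ∫⁻ p, (d p q) ^ 2 ∂Q ∂Q) ^ (1 / 2 : ℝ)) ^ (n + 1) :=
  stmt4_general Q d hmeas n
end

section
/- Let ε ∈ (0,1) and define d : (0,1) × (0,1) → [0,∞) by d(p,q) := max(p,q)^{−ε}. Let Q be Lebesgue measure on (0,1) and define the iterated kernels by d⁽¹⁾ := d and d⁽ⁿ⁺¹⁾(p,q) := ∫₀¹ d⁽ⁿ⁾(p,r) d(r,q) dr. Then there exists n ≥ 1 such that esssup_{p∈(0,1)} ∫₀¹ ( d⁽ⁿ⁾(p,q) )² dq < ∞. -/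
open MeasureTheory
open scoped ENNReal

open Set

/-!
Splitting `max(r,q)^{-ε} ≤ r^{-(ε-β)} q^{-β}` for `0 ≤ β ≤ ε`, a bound
`d⁽ⁿ⁾(p,r) ≤ C r^{-α}` propagates to `d⁽ⁿ⁺¹⁾(p,q) ≤ C' q^{-β}` as long as `r^{-(α+ε-β)}` stays
integrable, i.e. `α + ε - β < 1`. So each convolution can lower the singular exponent by
`(1-ε)/2`, giving `d⁽ⁿ⁺¹⁾(p,q) ≤ C q^{-max(ε - n(1-ε)/2, 0)}`: for large `n` the kernel is bounded.
-/

lemma setLIntegral_Ioo_ofReal_rpow_neg_lt_top {β : ℝ} (hβ : β < 1) :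
    ∫⁻ r in Ioo (0 : ℝ) 1, ENNReal.ofReal (r ^ (-β)) < ⊤ :=
  ((intervalIntegral.integrableOn_Ioo_rpow_iff one_pos).2 (by linarith)).setLIntegral_lt_top

lemma max_rpow_neg_le_mul {r q ε β : ℝ} (hr : 0 < r) (hq : 0 < q) (hβ : 0 ≤ β)
    (hβε : β ≤ ε) :
    max r q ^ (-ε) ≤ r ^ (-(ε - β)) * q ^ (-β) := by
  have hm : 0 < max r q := hr.trans_le (le_max_left r q)
  calc max r q ^ (-ε) = max r q ^ (-(ε - β)) * max r q ^ (-β) := by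
        rw [← Real.rpow_add hm]; ring_nf
    _ ≤ r ^ (-(ε - β)) * q ^ (-β) :=
        mul_le_mul (Real.rpow_le_rpow_of_nonpos hr (le_max_left r q) (by linarith))
          (Real.rpow_le_rpow_of_nonpos hq (le_max_right r q) (by linarith))
          (by positivity) (by positivity)

lemma setLIntegral_Ioo_mul_max_rpow_neg_le {ε α β : ℝ} {C : ℝ≥0∞} {K : ℝ → ℝ≥0∞}
    (hβ : 0 ≤ β) (hβε : β ≤ ε)
    (hK : ∀ r ∈ Ioo (0 : ℝ) 1, K r ≤ C * ENNReal.ofReal (r ^ (-α)))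
    {q : ℝ} (hq : 0 < q) :
    ∫⁻ r in Ioo (0 : ℝ) 1, K r * ENNReal.ofReal (max r q ^ (-ε)) ≤
      C * (∫⁻ r in Ioo (0 : ℝ) 1, ENNReal.ofReal (r ^ (-(α + (ε - β))))) *
        ENNReal.ofReal (q ^ (-β)) := by
  calc ∫⁻ r in Ioo (0 : ℝ) 1, K r * ENNReal.ofReal (max r q ^ (-ε))
      ≤ ∫⁻ r in Ioo (0 : ℝ) 1,
          C * ENNReal.ofReal (r ^ (-(α + (ε - β)))) * ENNReal.ofReal (q ^ (-β)) := by
        refine setLIntegral_mono' measurableSet_Ioo fun r hr => ?_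
        calc K r * ENNReal.ofReal (max r q ^ (-ε))
            ≤ C * ENNReal.ofReal (r ^ (-α)) *
                ENNReal.ofReal (r ^ (-(ε - β)) * q ^ (-β)) :=
              mul_le_mul' (hK r hr)
                (ENNReal.ofReal_le_ofReal (max_rpow_neg_le_mul hr.1 hq hβ hβε))
          _ = C * ENNReal.ofReal (r ^ (-(α + (ε - β)))) * ENNReal.ofReal (q ^ (-β)) := by
              rw [neg_add, Real.rpow_add hr.1, ENNReal.ofReal_mul (Real.rpow_nonneg hr.1.le _),
                ENNReal.ofReal_mul (Real.rpow_nonneg hr.1.le _)]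
              ring
    _ = _ := by
        rw [lintegral_mul_const' _ _ ENNReal.ofReal_ne_top,
          lintegral_const_mul _ (by fun_prop)]

lemma iterK_max_rpow_neg_le (ε : ℝ) (hε : ε ∈ Ioo (0 : ℝ) 1) (n : ℕ) :
    ∃ C : ℝ≥0∞, C ≠ ⊤ ∧ ∀ p q : ℝ, 0 < q →
      iterK (volume.restrict (Ioo (0 : ℝ) 1))
          (fun p q => ENNReal.ofReal (max p q ^ (-ε))) n p q
        ≤ C * ENNReal.ofReal (q ^ (-max (ε - n * ((1 - ε) / 2)) 0)) := by
  induction n with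
  | zero =>
    refine ⟨1, ENNReal.one_ne_top, fun p q hq => ?_⟩
    simpa [iterK, hε.1.le] using ENNReal.ofReal_le_ofReal
      (Real.rpow_le_rpow_of_nonpos hq (le_max_right p q) (by linarith [hε.1]))
  | succ n ih =>
    obtain ⟨C, hC, hCle⟩ := ih
    set α := max (ε - n * ((1 - ε) / 2)) 0
    set β := max (ε - (n + 1 : ℕ) * ((1 - ε) / 2)) 0
    have hβ0 : 0 ≤ β := le_max_right _ _
    have hβε : β ≤ ε := max_le (by push_cast; nlinarith [hε.2]) hε.1.le
    have hαβ : α ≤ β + (1 - ε) / 2 := by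
      have h : ε - ((n : ℝ) + 1) * ((1 - ε) / 2) ≤ β := by
        simp only [β, Nat.cast_succ]; exact le_max_left _ _
      exact max_le (by linarith) (by linarith [hε.2])
    have hI := setLIntegral_Ioo_ofReal_rpow_neg_lt_top (β := α + (ε - β)) (by linarith [hε.2])
    refine ⟨C * _, ENNReal.mul_ne_top hC hI.ne, fun p q hq => ?_⟩
    exact setLIntegral_Ioo_mul_max_rpow_neg_le hβ0 hβε
      (fun r hr => hCle p r hr.1) hq

lemma essSup_lintegral_sq_le {X : Type*} [MeasurableSpace X] {μ : Measure X}
    {K : X → X → ℝ≥0∞} {C : ℝ≥0∞} (hK : ∀ᵐ p ∂μ, ∀ᵐ q ∂μ, K p q ≤ C) :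
    essSup (fun p => ∫⁻ q, K p q ^ 2 ∂μ) μ ≤ C ^ 2 * μ univ := by
  refine essSup_le_of_ae_le _ (hK.mono fun p hp => ?_)
  calc ∫⁻ q, K p q ^ 2 ∂μ ≤ ∫⁻ _, C ^ 2 ∂μ :=
        lintegral_mono_ae (hp.mono fun q hq => pow_le_pow_left' hq 2)
    _ = C ^ 2 * μ univ := lintegral_const _

/-- For the max-kernel `d(p,q) = max(p,q)^{-ε}` on `(0,1)` with `ε ∈ (0,1)` and `Q`
Lebesgue measure on `(0,1)`, there exists `n ≥ 1` with `‖d⁽ⁿ⁾‖_{∞,2} < ∞`, i.e.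
`esssup_p ∫₀¹ d⁽ⁿ⁾(p,q)² dq < ∞`. -/
theorem stmt14 (ε : ℝ) (hε : ε ∈ Set.Ioo (0 : ℝ) 1) :
    ∃ n : ℕ,
      essSup
        (fun p : ℝ =>
          ∫⁻ q, (iterK (volume.restrict (Set.Ioo (0 : ℝ) 1))
              (fun p q => ENNReal.ofReal ((max p q) ^ (-ε))) n p q) ^ 2
            ∂(volume.restrict (Set.Ioo (0 : ℝ) 1)))
        (volume.restrict (Set.Ioo (0 : ℝ) 1)) < ⊤ := by
  obtain ⟨n, hn⟩ := exists_nat_gt (ε / ((1 - ε) / 2))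
  have hexp : max (ε - n * ((1 - ε) / 2)) 0 = 0 := by
    rw [div_lt_iff₀ (by linarith [hε.2])] at hn
    exact max_eq_right (by linarith)
  obtain ⟨C, hC, hCle⟩ := iterK_max_rpow_neg_le ε hε n
  refine ⟨n, (essSup_lintegral_sq_le (C := C)
    (Filter.Eventually.of_forall fun p => ?_)).trans_lt ?_⟩
  · filter_upwards [ae_restrict_mem measurableSet_Ioo] with q hq
    simpa [hexp] using hCle p q hq.1
  · simp [hC.lt_top]
end

section
/- Let Δ ≥ 1 be a real number and let M : (0,1) → ℝ be differentiable and strictly increasing with strictly positive derivative, satisfying γ ≤ M(γ) < 1 for all γ ∈ (0,1), M(γ) → 0 as γ ↓ 0, and M(γ)/γ → ∞ as γ ↓ 0. Suppose the differential inequality M(γ) ≤ γ·M′(γ) + Δ·M(γ)² + (1−γ)·Δ²·M(γ)²·M′(γ) holds for every γ ∈ (0,1). Then M(γ) ≥ √( γ / (Δ + Δ²) ) for every γ ∈ (0,1); in particular M(γ) ≥ √(γ/2) / Δ. -/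
/-!
The quantity `γ / M γ - Δ γ - Δ² M γ` is antitone on `(0,1)`: its derivative is
`(M - γ M') / M² - Δ - Δ² M'`, which is nonpositive exactly by the differential inequality
(after dropping the factor `1 - γ ≤ 1` in front of the positive term `Δ² M² M'`). As `γ ↓ 0` it
tends to `0`, because `γ / M γ → 0` and `M γ → 0`, so it is nonpositive on `(0,1)`. Hence
`γ ≤ Δ γ M + Δ² M² ≤ (Δ + Δ²) M²`, using `γ ≤ M` once more.
-/

open Set Filter Topology

lemma AntitoneOn.le_of_tendsto_nhdsGT {f : ℝ → ℝ} {a b l : ℝ} (hf : AntitoneOn f (Ioo a b))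
    (hlim : Tendsto f (𝓝[>] a) (𝓝 l)) {x : ℝ} (hx : x ∈ Ioo a b) : f x ≤ l :=
  ge_of_tendsto hlim <| by
    filter_upwards [Ioo_mem_nhdsGT hx.1] with y hy
    exact hf ⟨hy.1, hy.2.trans hx.2⟩ hx hy.2.le

lemma antitoneOn_Ioo_of_hasDerivAt_nonpos {f f' : ℝ → ℝ} {a b : ℝ}
    (hf : ∀ x ∈ Ioo a b, HasDerivAt f (f' x) x) (hf' : ∀ x ∈ Ioo a b, f' x ≤ 0) :
    AntitoneOn f (Ioo a b) :=
  antitoneOn_of_hasDerivWithinAt_nonpos (convex_Ioo a b)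
    (fun x hx ↦ (hf x hx).continuousAt.continuousWithinAt)
    (fun x hx ↦ (hf x (by rwa [interior_Ioo] at hx)).hasDerivWithinAt)
    (fun x hx ↦ hf' x (by rwa [interior_Ioo] at hx))

/-- In the variable `x = M γ` this is `x⁻¹ M⁻¹(x) - Δ M⁻¹(x) - Δ² x`, the quantity whose
derivative the Aizenman–Barsky inequality bounds. -/
noncomputable def magnetizationDefect (Δ : ℝ) (M : ℝ → ℝ) (γ : ℝ) : ℝ :=
  γ / M γ - Δ * γ - Δ ^ 2 * M γ

section

variable {Δ : ℝ} {M : ℝ → ℝ}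

lemma hasDerivAt_magnetizationDefect {m γ : ℝ} (hM : HasDerivAt M m γ) (hMγ : M γ ≠ 0) :
    HasDerivAt (magnetizationDefect Δ M) ((M γ - γ * m) / M γ ^ 2 - Δ - Δ ^ 2 * m) γ := by
  have h := (((hasDerivAt_id' γ).div hM hMγ).sub ((hasDerivAt_id' γ).const_mul Δ)).sub
    (hM.const_mul (Δ ^ 2))
  simp only [one_mul, mul_one] at h
  exact h

lemma magnetizationDefect_deriv_nonpos {m γ : ℝ} (hγ : 0 ≤ γ) (hm : 0 ≤ m)
    (hMγ : 0 < M γ) (hineq : M γ ≤ γ * m + Δ * M γ ^ 2 + (1 - γ) * Δ ^ 2 * M γ ^ 2 * m) :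
    (M γ - γ * m) / M γ ^ 2 - Δ - Δ ^ 2 * m ≤ 0 := by
  have hdrop : (1 - γ) * Δ ^ 2 * M γ ^ 2 * m ≤ Δ ^ 2 * M γ ^ 2 * m := by
    have : 0 ≤ γ * (Δ ^ 2 * M γ ^ 2 * m) := by positivity
    linarith
  have : (M γ - γ * m) / M γ ^ 2 ≤ Δ + Δ ^ 2 * m := by
    rw [div_le_iff₀ (by positivity)]
    linarith
  linarith

lemma tendsto_magnetizationDefect_nhdsGT_zero (hlim0 : Tendsto M (𝓝[>] 0) (𝓝 0))
    (hlimratio : Tendsto (fun γ ↦ M γ / γ) (𝓝[>] 0) atTop) :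
    Tendsto (magnetizationDefect Δ M) (𝓝[>] 0) (𝓝 0) := by
  have hinv : Tendsto (fun γ ↦ γ / M γ) (𝓝[>] 0) (𝓝 0) := by
    simpa [Pi.inv_def, inv_div] using hlimratio.inv_tendsto_atTop
  have hlin : Tendsto (fun γ : ℝ ↦ Δ * γ) (𝓝[>] 0) (𝓝 0) :=
    tendsto_nhdsWithin_of_tendsto_nhds ((continuous_const_mul Δ).tendsto' 0 0 (mul_zero Δ))
  have h := (hinv.sub hlin).sub (hlim0.const_mul (Δ ^ 2))
  simp only [sub_zero, mul_zero] at h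
  exact h

lemma le_mul_sq_of_magnetizationDefect_nonpos {γ : ℝ} (hΔ : 0 ≤ Δ) (hγM : γ ≤ M γ)
    (hMγ : 0 < M γ) (hdef : magnetizationDefect Δ M γ ≤ 0) : γ ≤ (Δ + Δ ^ 2) * M γ ^ 2 := by
  have h : γ / M γ ≤ Δ * γ + Δ ^ 2 * M γ := by
    unfold magnetizationDefect at hdef
    linarith
  rw [div_le_iff₀ hMγ] at h
  nlinarith [mul_le_mul_of_nonneg_left hγM (mul_nonneg hΔ hMγ.le)]

end

lemma sqrt_half_div_le_sqrt_div_add_sq {Δ γ : ℝ} (hΔ : 1 ≤ Δ) (hγ : 0 ≤ γ) :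
    √(γ / 2) / Δ ≤ √(γ / (Δ + Δ ^ 2)) := by
  have hΔ0 : 0 < Δ := one_pos.trans_le hΔ
  rw [Real.le_sqrt (by positivity) (by positivity), div_pow, Real.sq_sqrt (by positivity), div_div]
  exact div_le_div_of_nonneg_left hγ (by positivity) (by nlinarith)

theorem stmt15_general (Δ : ℝ) (hΔ : 1 ≤ Δ) (M M' : ℝ → ℝ)
    (hderiv : ∀ γ ∈ Set.Ioo (0 : ℝ) 1, HasDerivAt M (M' γ) γ)
    (hpos : ∀ γ ∈ Set.Ioo (0 : ℝ) 1, 0 < M' γ)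
    (hbound : ∀ γ ∈ Set.Ioo (0 : ℝ) 1, γ ≤ M γ ∧ M γ < 1)
    (hlim0 : Filter.Tendsto M (nhdsWithin 0 (Set.Ioi 0)) (nhds 0))
    (hlimratio : Filter.Tendsto (fun γ => M γ / γ) (nhdsWithin 0 (Set.Ioi 0))
      Filter.atTop)
    (hineq : ∀ γ ∈ Set.Ioo (0 : ℝ) 1,
      M γ ≤ γ * M' γ + Δ * (M γ) ^ 2 + (1 - γ) * Δ ^ 2 * (M γ) ^ 2 * M' γ) :
    ∀ γ ∈ Set.Ioo (0 : ℝ) 1,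
      Real.sqrt (γ / (Δ + Δ ^ 2)) ≤ M γ ∧ Real.sqrt (γ / 2) / Δ ≤ M γ := by
  have hMpos : ∀ γ ∈ Ioo (0 : ℝ) 1, 0 < M γ := fun γ hγ ↦ hγ.1.trans_le (hbound γ hγ).1
  have hanti : AntitoneOn (magnetizationDefect Δ M) (Ioo 0 1) :=
    antitoneOn_Ioo_of_hasDerivAt_nonpos
      (fun γ hγ ↦ hasDerivAt_magnetizationDefect (hderiv γ hγ) (hMpos γ hγ).ne')
      (fun γ hγ ↦ magnetizationDefect_deriv_nonpos hγ.1.le (hpos γ hγ).le (hMpos γ hγ) (hineq γ hγ))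
  intro γ hγ
  have hdef := hanti.le_of_tendsto_nhdsGT
    (tendsto_magnetizationDefect_nhdsGT_zero hlim0 hlimratio) hγ
  have hsq := le_mul_sq_of_magnetizationDefect_nonpos (zero_le_one.trans hΔ) (hbound γ hγ).1
    (hMpos γ hγ) hdef
  have hmain : √(γ / (Δ + Δ ^ 2)) ≤ M γ := by
    rw [Real.sqrt_le_left (hMpos γ hγ).le, div_le_iff₀ (by positivity)]
    linarith
  exact ⟨hmain, (sqrt_half_div_le_sqrt_div_add_sq hΔ hγ.1.le).trans hmain⟩

/-- Analytic core of the Aizenman–Barsky magnetization lower bound: if `Δ ≥ 1` and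
`M : (0,1) → ℝ` is differentiable and strictly increasing with positive derivative `M'`,
satisfies `γ ≤ M(γ) < 1`, `M(γ) → 0` and `M(γ)/γ → ∞` as `γ ↓ 0`, and the differential
inequality `M ≤ γ M' + Δ M² + (1-γ) Δ² M² M'` holds on `(0,1)`, then
`M(γ) ≥ √(γ/(Δ+Δ²)) ≥ √(γ/2)/Δ` on `(0,1)`. -/
theorem stmt15 (Δ : ℝ) (hΔ : 1 ≤ Δ) (M M' : ℝ → ℝ)
    (hderiv : ∀ γ ∈ Set.Ioo (0 : ℝ) 1, HasDerivAt M (M' γ) γ)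
    (hpos : ∀ γ ∈ Set.Ioo (0 : ℝ) 1, 0 < M' γ)
    (hmono : StrictMonoOn M (Set.Ioo (0 : ℝ) 1))
    (hbound : ∀ γ ∈ Set.Ioo (0 : ℝ) 1, γ ≤ M γ ∧ M γ < 1)
    (hlim0 : Filter.Tendsto M (nhdsWithin 0 (Set.Ioi 0)) (nhds 0))
    (hlimratio : Filter.Tendsto (fun γ => M γ / γ) (nhdsWithin 0 (Set.Ioi 0))
      Filter.atTop)
    (hineq : ∀ γ ∈ Set.Ioo (0 : ℝ) 1,
      M γ ≤ γ * M' γ + Δ * (M γ) ^ 2 + (1 - γ) * Δ ^ 2 * (M γ) ^ 2 * M' γ) :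
    ∀ γ ∈ Set.Ioo (0 : ℝ) 1,
      Real.sqrt (γ / (Δ + Δ ^ 2)) ≤ M γ ∧ Real.sqrt (γ / 2) / Δ ≤ M γ :=
  stmt15_general Δ hΔ M M' hderiv hpos hbound hlim0 hlimratio hineq
end

section
/- Let Δ ≥ 1 and 0 < t₀ < t₁ be real numbers. Let M : [t₀,t₁] × (0,1) → ℝ take values in (0,1], be nondecreasing in each variable, and be continuously differentiable (both partial derivatives ∂_t M and ∂_γ M exist and are continuous on [t₀,t₁] × (0,1)). Assume: (i) for all (t,γ) ∈ [t₀,t₁] × (0,1), 1/γ ≤ ∂_γ M(t,γ)/M(t,γ) + (Δ/γ)·( M(t,γ) + t·∂_t M(t,γ) ); and (ii) M(t₀,γ) ≥ √(γ/2)/Δ for all γ ∈ (0,1). Then M(t₁,γ) ≥ (t₁ − t₀)/(2·t₁·Δ) for every γ ∈ (0,1). -/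
/-!
Let `F γ = ∫_{t₀}^{t₁} log M(t, γ) dt` and `c = t₁ - t₀ - Δ t₁ M(t₁, γ₂)`. Since
`M + t ∂ₜM = ∂ₜ(t M)`, integrating the differential inequality over `t ∈ [t₀, t₁]` and using
monotonicity in `γ` gives `F'(γ) ≥ c / γ` for `γ ≤ γ₂`, hence
`F γ₂ - F γ₁ ≥ c (log γ₂ - log γ₁)`. As `M ≤ 1`, `F γ₂ ≤ 0`, while the lower bound at `t₀`
gives `F γ₁ ≥ (t₁ - t₀) (log γ₁ / 2 - O(1))`. Letting `γ₁ → 0` forces `c ≤ (t₁ - t₀) / 2`,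
which is the claim.
-/

open Set Real Filter Topology MeasureTheory

theorem le_integral_of_le_add_mul_deriv_id_mul {m m' r : ℝ → ℝ} {a b α β : ℝ} (hab : a ≤ b)
    (hm : ∀ t ∈ Icc a b, HasDerivAt m (m' t) t) (hr : ContinuousOn r (Icc a b))
    (h : ∀ t ∈ Icc a b, α ≤ r t + β * (m t + t * m' t)) :
    (b - a) * α - β * (b * m b - a * m a) ≤ ∫ t in a..b, r t := by
  have hg : ∀ t ∈ Icc a b,
      HasDerivAt (fun t => α * t - β * (t * m t)) (α - β * (m t + t * m' t)) t := by
    intro t ht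
    exact ((hasDerivAt_id' t |>.const_mul α).fun_sub
      ((hasDerivAt_id' t |>.fun_mul (hm t ht)).const_mul β)).congr_deriv (by ring)
  have := intervalIntegral.sub_le_integral_of_hasDeriv_right_of_le hab
    (fun t ht => (hg t ht).continuousAt.continuousWithinAt)
    (fun t ht => (hg t (Ioo_subset_Icc_self ht)).hasDerivWithinAt) hr.integrableOn_Icc
    (fun t ht => by linarith [h t (Ioo_subset_Icc_self ht)])
  linarith

theorem hasDerivAt_intervalIntegral_of_abs_deriv_le {F F' : ℝ → ℝ → ℝ} {a b p q x₀ C : ℝ}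
    (hx₀ : x₀ ∈ Ioo p q)
    (hF : ∀ x ∈ Ioo p q, ContinuousOn (fun t => F t x) (uIcc a b))
    (hF' : ContinuousOn (fun t => F' t x₀) (uIcc a b))
    (hderiv : ∀ t ∈ uIcc a b, ∀ x ∈ Ioo p q, HasDerivAt (F t) (F' t x) x)
    (hbound : ∀ t ∈ uIcc a b, ∀ x ∈ Ioo p q, |F' t x| ≤ C) :
    HasDerivAt (fun x => ∫ t in a..b, F t x) (∫ t in a..b, F' t x₀) x₀ := by
  have hIoo : Ioo p q ∈ 𝓝 x₀ := Ioo_mem_nhds hx₀.1 hx₀.2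
  refine (intervalIntegral.hasDerivAt_integral_of_dominated_loc_of_deriv_le
    (F := fun x t => F t x) (F' := fun x t => F' t x) (bound := fun _ => C)
    hIoo ?_ (hF x₀ hx₀).intervalIntegrable
    ((hF'.mono uIoc_subset_uIcc).aestronglyMeasurable measurableSet_uIoc) ?_
    intervalIntegrable_const ?_).2
  · filter_upwards [hIoo] with x hx
    exact ((hF x hx).mono uIoc_subset_uIcc).aestronglyMeasurable measurableSet_uIoc
  · exact ae_of_all _ fun t ht x hx => hbound t (uIoc_subset_uIcc ht) x hx
  · exact ae_of_all _ fun t ht x hx => hderiv t (uIoc_subset_uIcc ht) x hx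

theorem mul_log_sub_log_le_sub_of_hasDerivAt {f f' : ℝ → ℝ} {a b c : ℝ} (ha : 0 < a)
    (hab : a ≤ b) (hf : ∀ x ∈ Icc a b, HasDerivAt f (f' x) x)
    (hf' : ∀ x ∈ Icc a b, c / x ≤ f' x) :
    c * (log b - log a) ≤ f b - f a := by
  have hg : ∀ x ∈ Icc a b, HasDerivAt (fun x => f x - c * log x) (f' x - c * x⁻¹) x :=
    fun x hx => (hf x hx).sub ((hasDerivAt_log (ha.trans_le hx.1).ne').const_mul c)
  have hmono := monotoneOn_of_hasDerivWithinAt_nonneg (convex_Icc a b)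
    (fun x hx => (hg x hx).continuousAt.continuousWithinAt)
    (fun x hx => (hg x (interior_subset hx)).hasDerivWithinAt)
    (fun x hx => by
      have := hf' x (interior_subset hx)
      rw [← div_eq_mul_inv]; linarith)
    (left_mem_Icc.2 hab) (right_mem_Icc.2 hab) hab
  simp only at hmono
  linarith

theorem hasDerivAt_intervalIntegral_log {M Mγ : ℝ → ℝ → ℝ} {a b p q x₀ m : ℝ} (hab : a ≤ b)
    (hx₀ : x₀ ∈ Ioo p q) (hm : 0 < m) (hlow : ∀ t ∈ Icc a b, ∀ x ∈ Icc p q, m ≤ M t x)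
    (hcont : ∀ x ∈ Icc p q, ContinuousOn (fun t => M t x) (Icc a b))
    (hderiv : ∀ t ∈ Icc a b, ∀ x ∈ Icc p q, HasDerivAt (M t) (Mγ t x) x)
    (hMγ : ContinuousOn (fun z : ℝ × ℝ => Mγ z.1 z.2) (Icc a b ×ˢ Icc p q)) :
    HasDerivAt (fun x => ∫ t in a..b, log (M t x)) (∫ t in a..b, Mγ t x₀ / M t x₀) x₀ := by
  obtain ⟨C, hC⟩ := (isCompact_Icc.prod isCompact_Icc).exists_bound_of_continuousOn hMγ
  have hpos : ∀ t ∈ Icc a b, ∀ x ∈ Icc p q, M t x ≠ 0 :=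
    fun t ht x hx => (hm.trans_le (hlow t ht x hx)).ne'
  have hx₀' := Ioo_subset_Icc_self hx₀
  refine hasDerivAt_intervalIntegral_of_abs_deriv_le (F := fun t x => log (M t x))
    (F' := fun t x => Mγ t x / M t x) (C := C / m) hx₀ ?_ ?_ ?_ ?_ <;>
    rw [uIcc_of_le hab]
  · exact fun x hx => (hcont x (Ioo_subset_Icc_self hx)).log fun t ht =>
      hpos t ht x (Ioo_subset_Icc_self hx)
  · refine ContinuousOn.div ?_ (hcont x₀ hx₀') fun t ht => hpos t ht x₀ hx₀'
    exact hMγ.comp (continuous_id.prodMk continuous_const).continuousOn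
      fun t ht => mk_mem_prod ht hx₀'
  · exact fun t ht x hx =>
      (hderiv t ht x (Ioo_subset_Icc_self hx)).log (hpos t ht x (Ioo_subset_Icc_self hx))
  · intro t ht x hx
    have hMγ_le : |Mγ t x| ≤ C := hC (t, x) (mk_mem_prod ht (Ioo_subset_Icc_self hx))
    have hm_le := hlow t ht x (Ioo_subset_Icc_self hx)
    rw [abs_div, abs_of_pos (hm.trans_le hm_le)]
    exact div_le_div₀ ((abs_nonneg _).trans hMγ_le) hMγ_le hm hm_le

theorem mul_log_le_intervalIntegral_log {f : ℝ → ℝ} {a b m : ℝ} (hab : a ≤ b) (hm : 0 < m)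
    (hf : ContinuousOn f (Icc a b)) (hle : ∀ t ∈ Icc a b, m ≤ f t) :
    (b - a) * log m ≤ ∫ t in a..b, log (f t) := by
  have hlog : ContinuousOn (fun t => log (f t)) (uIcc a b) := by
    rw [uIcc_of_le hab]
    exact hf.log fun t ht => (hm.trans_le (hle t ht)).ne'
  simpa using intervalIntegral.integral_mono_on (μ := volume) hab intervalIntegrable_const
    hlog.intervalIntegrable fun t ht => log_le_log hm (hle t ht)

theorem intervalIntegral_log_nonpos {f : ℝ → ℝ} {a b : ℝ} (hab : a ≤ b)
    (hf : ∀ t ∈ Icc a b, f t ∈ Ioc (0 : ℝ) 1) :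
    ∫ t in a..b, log (f t) ≤ 0 := by
  have := intervalIntegral.integral_nonneg (μ := volume) hab fun t ht =>
    neg_nonneg.2 (log_nonpos (hf t ht).1.le (hf t ht).2)
  rwa [intervalIntegral.integral_neg, neg_nonneg] at this

theorem hasDerivAt_intervalIntegral_log_of_monotoneOn {t₀ t₁ γ : ℝ} {M Mγ : ℝ → ℝ → ℝ}
    (ht : t₀ ≤ t₁) (hγ : γ ∈ Ioo (0 : ℝ) 1)
    (hpos : ∀ t ∈ Icc t₀ t₁, ∀ γ ∈ Ioo (0 : ℝ) 1, 0 < M t γ)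
    (hmono_t : ∀ γ ∈ Ioo (0 : ℝ) 1, MonotoneOn (fun t => M t γ) (Icc t₀ t₁))
    (hmono_γ : ∀ t ∈ Icc t₀ t₁, MonotoneOn (fun γ => M t γ) (Ioo (0 : ℝ) 1))
    (hcont : ∀ γ ∈ Ioo (0 : ℝ) 1, ContinuousOn (fun t => M t γ) (Icc t₀ t₁))
    (hdγ : ∀ t ∈ Icc t₀ t₁, ∀ γ ∈ Ioo (0 : ℝ) 1, HasDerivAt (fun g => M t g) (Mγ t γ) γ)
    (hcγ : ContinuousOn (fun z : ℝ × ℝ => Mγ z.1 z.2) (Icc t₀ t₁ ×ˢ Ioo (0 : ℝ) 1)) :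
    HasDerivAt (fun γ => ∫ t in t₀..t₁, log (M t γ)) (∫ t in t₀..t₁, Mγ t γ / M t γ) γ := by
  obtain ⟨hγ0, hγ1⟩ := hγ
  have hsub : Icc (γ / 2) ((1 + γ) / 2) ⊆ Ioo 0 1 :=
    fun x hx => ⟨by linarith [hx.1], by linarith [hx.2]⟩
  have ht₀ : t₀ ∈ Icc t₀ t₁ := left_mem_Icc.2 ht
  have hγ_half : γ / 2 ∈ Icc (γ / 2) ((1 + γ) / 2) := left_mem_Icc.2 (by linarith)
  refine hasDerivAt_intervalIntegral_log ht ⟨by linarith, by linarith⟩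
    (hpos t₀ ht₀ _ (hsub hγ_half)) (fun t ht x hx => ?_) (fun x hx => hcont x (hsub hx))
    (fun t ht x hx => hdγ t ht x (hsub hx)) (hcγ.mono (prod_mono subset_rfl hsub))
  calc M t₀ (γ / 2) ≤ M t₀ x := hmono_γ t₀ ht₀ (hsub hγ_half) (hsub hx) hx.1
    _ ≤ M t x := hmono_t x (hsub hx) ht₀ ht ht.1

theorem mul_log_sub_log_le_intervalIntegral_log_sub {Δ t₀ t₁ γ₁ γ₂ : ℝ}
    {M Mt Mγ : ℝ → ℝ → ℝ} (hΔ : 0 ≤ Δ) (ht₀ : 0 ≤ t₀) (ht : t₀ ≤ t₁) (hγ₁ : 0 < γ₁)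
    (hγ₁₂ : γ₁ ≤ γ₂) (hγ₂ : γ₂ < 1)
    (hpos : ∀ t ∈ Icc t₀ t₁, ∀ γ ∈ Ioo (0 : ℝ) 1, 0 < M t γ)
    (hmono_t : ∀ γ ∈ Ioo (0 : ℝ) 1, MonotoneOn (fun t => M t γ) (Icc t₀ t₁))
    (hmono_γ : ∀ t ∈ Icc t₀ t₁, MonotoneOn (fun γ => M t γ) (Ioo (0 : ℝ) 1))
    (hdt : ∀ t ∈ Icc t₀ t₁, ∀ γ ∈ Ioo (0 : ℝ) 1, HasDerivAt (fun s => M s γ) (Mt t γ) t)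
    (hdγ : ∀ t ∈ Icc t₀ t₁, ∀ γ ∈ Ioo (0 : ℝ) 1, HasDerivAt (fun g => M t g) (Mγ t γ) γ)
    (hcγ : ContinuousOn (fun z : ℝ × ℝ => Mγ z.1 z.2) (Icc t₀ t₁ ×ˢ Ioo (0 : ℝ) 1))
    (hineq : ∀ t ∈ Icc t₀ t₁, ∀ γ ∈ Ioo (0 : ℝ) 1,
      1 / γ ≤ Mγ t γ / M t γ + (Δ / γ) * (M t γ + t * Mt t γ)) :
    (t₁ - t₀ - Δ * t₁ * M t₁ γ₂) * (log γ₂ - log γ₁) ≤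
      (∫ t in t₀..t₁, log (M t γ₂)) - ∫ t in t₀..t₁, log (M t γ₁) := by
  have hsub : Icc γ₁ γ₂ ⊆ Ioo 0 1 :=
    fun x hx => ⟨hγ₁.trans_le hx.1, hx.2.trans_lt hγ₂⟩
  have hcont : ∀ γ ∈ Ioo (0 : ℝ) 1, ContinuousOn (fun t => M t γ) (Icc t₀ t₁) :=
    fun γ hγ t ht => (hdt t ht γ hγ).continuousAt.continuousWithinAt
  refine mul_log_sub_log_le_sub_of_hasDerivAt hγ₁ hγ₁₂ (fun γ hγ =>
    hasDerivAt_intervalIntegral_log_of_monotoneOn ht (hsub hγ) hpos hmono_t hmono_γ hcont hdγ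
      hcγ) fun γ hγ => ?_
  obtain ⟨hγ0, hγ1⟩ := hsub hγ
  have hMγ_cont : ContinuousOn (fun t => Mγ t γ) (Icc t₀ t₁) :=
    hcγ.comp (continuous_id.prodMk continuous_const).continuousOn
      fun t ht => mk_mem_prod ht ⟨hγ0, hγ1⟩
  have hint := le_integral_of_le_add_mul_deriv_id_mul ht (fun t ht => hdt t ht γ ⟨hγ0, hγ1⟩)
    (hMγ_cont.div (hcont γ ⟨hγ0, hγ1⟩) fun t ht => (hpos t ht γ ⟨hγ0, hγ1⟩).ne')
    fun t ht => hineq t ht γ ⟨hγ0, hγ1⟩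
  have hM₁ : M t₁ γ ≤ M t₁ γ₂ :=
    hmono_γ t₁ (right_mem_Icc.2 ht) ⟨hγ0, hγ1⟩ (hsub (right_mem_Icc.2 hγ₁₂)) hγ.2
  have hM₀ : 0 ≤ t₀ * M t₀ γ := mul_nonneg ht₀ (hpos t₀ (left_mem_Icc.2 ht) γ ⟨hγ0, hγ1⟩).le
  calc (t₁ - t₀ - Δ * t₁ * M t₁ γ₂) / γ = (t₁ - t₀) * (1 / γ) - Δ / γ * (t₁ * M t₁ γ₂) := by
        ring
    _ ≤ (t₁ - t₀) * (1 / γ) - Δ / γ * (t₁ * M t₁ γ - t₀ * M t₀ γ) := by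
        gcongr
        nlinarith [mul_le_mul_of_nonneg_left hM₁ (ht₀.trans ht)]
    _ ≤ _ := hint

theorem stmt16_general (Δ t₀ t₁ : ℝ) (hΔ : 1 ≤ Δ) (ht₀ : 0 < t₀) (ht : t₀ < t₁)
    (M Mt Mγ : ℝ → ℝ → ℝ)
    (hval : ∀ t ∈ Set.Icc t₀ t₁, ∀ γ ∈ Set.Ioo (0 : ℝ) 1, M t γ ∈ Set.Ioc (0 : ℝ) 1)
    (hmono_t : ∀ γ ∈ Set.Ioo (0 : ℝ) 1, MonotoneOn (fun t => M t γ) (Set.Icc t₀ t₁))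
    (hmono_γ : ∀ t ∈ Set.Icc t₀ t₁, MonotoneOn (fun γ => M t γ) (Set.Ioo (0 : ℝ) 1))
    (hdt : ∀ t ∈ Set.Icc t₀ t₁, ∀ γ ∈ Set.Ioo (0 : ℝ) 1,
      HasDerivAt (fun s => M s γ) (Mt t γ) t)
    (hdγ : ∀ t ∈ Set.Icc t₀ t₁, ∀ γ ∈ Set.Ioo (0 : ℝ) 1,
      HasDerivAt (fun g => M t g) (Mγ t γ) γ)
    (hcγ : ContinuousOn (fun z : ℝ × ℝ => Mγ z.1 z.2)
      (Set.Icc t₀ t₁ ×ˢ Set.Ioo (0 : ℝ) 1))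
    (hineq : ∀ t ∈ Set.Icc t₀ t₁, ∀ γ ∈ Set.Ioo (0 : ℝ) 1,
      1 / γ ≤ Mγ t γ / M t γ + (Δ / γ) * (M t γ + t * Mt t γ))
    (hlow : ∀ γ ∈ Set.Ioo (0 : ℝ) 1, Real.sqrt (γ / 2) / Δ ≤ M t₀ γ) :
    ∀ γ ∈ Set.Ioo (0 : ℝ) 1, (t₁ - t₀) / (2 * t₁ * Δ) ≤ M t₁ γ := by
  intro γ₂ hγ₂
  by_contra! hlt
  have hΔ0 : 0 < Δ := by linarith
  have ht₁ : 0 < t₁ := ht₀.trans ht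
  set c := t₁ - t₀ - Δ * t₁ * M t₁ γ₂
  have hc : (t₁ - t₀) / 2 < c := by
    have := mul_lt_mul_of_pos_left hlt (by positivity : 0 < Δ * t₁)
    rw [show Δ * t₁ * ((t₁ - t₀) / (2 * t₁ * Δ)) = (t₁ - t₀) / 2 by field_simp] at this
    linarith
  have hpos t hτ γ hγ : 0 < M t γ := (hval t hτ γ hγ).1
  obtain ⟨γ₁, hbig, hγ₁0, hγ₁2⟩ := ((tendsto_log_nhdsGT_zero.atBot_mul_const_of_neg
    (neg_lt_zero.2 (sub_pos.2 hc))).eventually_gt_atTop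
      ((t₁ - t₀) * (log 2 / 2 + log Δ) - c * log γ₂) |>.and (Ioo_mem_nhdsGT hγ₂.1)).exists
  have hγ₁ : γ₁ ∈ Ioo (0 : ℝ) 1 := ⟨hγ₁0, hγ₁2.trans hγ₂.2⟩
  have hgrowth := mul_log_sub_log_le_intervalIntegral_log_sub hΔ0.le ht₀.le ht.le hγ₁0
    hγ₁2.le hγ₂.2 hpos hmono_t hmono_γ hdt hdγ hcγ hineq
  have hF₂ := intervalIntegral_log_nonpos ht.le fun t hτ => hval t hτ γ₂ hγ₂
  have hF₁ := mul_log_le_intervalIntegral_log ht.le (by positivity)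
    (fun t hτ => (hdt t hτ γ₁ hγ₁).continuousAt.continuousWithinAt)
    fun t hτ => (hlow γ₁ hγ₁).trans (hmono_t γ₁ hγ₁ (left_mem_Icc.2 ht.le) hτ hτ.1)
  rw [log_div (by positivity) hΔ0.ne', log_sqrt (by positivity),
    log_div hγ₁0.ne' two_ne_zero] at hF₁
  linarith

/-- Analytic core of the percolation mean-field lower bound. Let `Δ ≥ 1`,
`0 < t₀ < t₁`, and let `M : [t₀,t₁] × (0,1) → (0,1]` be nondecreasing in each variable
and continuously differentiable with partial derivatives `Mt` (in `t`) and `Mγ`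
(in `γ`). If `1/γ ≤ Mγ/M + (Δ/γ)(M + t ∂ₜM)` on `[t₀,t₁] × (0,1)` and
`M(t₀,γ) ≥ √(γ/2)/Δ` for all `γ ∈ (0,1)`, then
`M(t₁,γ) ≥ (t₁ - t₀)/(2 t₁ Δ)` for every `γ ∈ (0,1)`. -/
theorem stmt16 (Δ t₀ t₁ : ℝ) (hΔ : 1 ≤ Δ) (ht₀ : 0 < t₀) (ht : t₀ < t₁)
    (M Mt Mγ : ℝ → ℝ → ℝ)
    (hval : ∀ t ∈ Set.Icc t₀ t₁, ∀ γ ∈ Set.Ioo (0 : ℝ) 1, M t γ ∈ Set.Ioc (0 : ℝ) 1)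
    (hmono_t : ∀ γ ∈ Set.Ioo (0 : ℝ) 1, MonotoneOn (fun t => M t γ) (Set.Icc t₀ t₁))
    (hmono_γ : ∀ t ∈ Set.Icc t₀ t₁, MonotoneOn (fun γ => M t γ) (Set.Ioo (0 : ℝ) 1))
    (hdt : ∀ t ∈ Set.Icc t₀ t₁, ∀ γ ∈ Set.Ioo (0 : ℝ) 1,
      HasDerivAt (fun s => M s γ) (Mt t γ) t)
    (hdγ : ∀ t ∈ Set.Icc t₀ t₁, ∀ γ ∈ Set.Ioo (0 : ℝ) 1,
      HasDerivAt (fun g => M t g) (Mγ t γ) γ)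
    (hct : ContinuousOn (fun z : ℝ × ℝ => Mt z.1 z.2)
      (Set.Icc t₀ t₁ ×ˢ Set.Ioo (0 : ℝ) 1))
    (hcγ : ContinuousOn (fun z : ℝ × ℝ => Mγ z.1 z.2)
      (Set.Icc t₀ t₁ ×ˢ Set.Ioo (0 : ℝ) 1))
    (hineq : ∀ t ∈ Set.Icc t₀ t₁, ∀ γ ∈ Set.Ioo (0 : ℝ) 1,
      1 / γ ≤ Mγ t γ / M t γ + (Δ / γ) * (M t γ + t * Mt t γ))
    (hlow : ∀ γ ∈ Set.Ioo (0 : ℝ) 1, Real.sqrt (γ / 2) / Δ ≤ M t₀ γ) :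
    ∀ γ ∈ Set.Ioo (0 : ℝ) 1, (t₁ - t₀) / (2 * t₁ * Δ) ≤ M t₁ γ :=
  stmt16_general Δ t₀ t₁ hΔ ht₀ ht M Mt Mγ hval hmono_t hmono_γ hdt hdγ hcγ hineq hlow
end
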